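/- Assume A has full row rank and let F be a nonempty face of Y⁰ such that the columns A_i with i ∈ 𝒜⁺(F) ∪ 𝒜⁻(F) are linearly independent. Then S is single-valued and linear on D_F: for each (λ,b) ∈ D_F, S(λ,b) = {x} where x is the unique solution of the linear system A_iᵀAx = A_iᵀb − λ for i ∈ 𝒜⁺(F), x_i = 0 for i ∈ 𝒜⁰(F), A_iᵀAx = A_iᵀb + λ for i ∈ 𝒜⁻(F); moreover x depends linearly on (λ,b). -/

import Mathlib

open Set

noncomputable section

variable {m n : ℕ}

/-- Euclidean distance between two vectors. -/
def en {k : ℕ} (x x' : Fin k → ℝ) : ℝ := Real.sqrt (∑ i, (x i - x' i) ^ 2)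

/-- The ℓ₁ norm. -/
def l1 {k : ℕ} (x : Fin k → ℝ) : ℝ := ∑ i, |x i|

/-- Squared Euclidean norm. -/
def sqnorm {k : ℕ} (y : Fin k → ℝ) : ℝ := ∑ i, (y i) ^ 2

/-- `A_iᵀ y`, the dot product of the `i`-th column of `A` with `y`. -/
def colDot (A : Matrix (Fin m) (Fin n) ℝ) (i : Fin n) (y : Fin m → ℝ) : ℝ := ∑ k, A k i * y k

/-- The dual feasible set `Y⁰ = {y : ‖Aᵀy‖_∞ ≤ 1}`. -/
def Ydual (A : Matrix (Fin m) (Fin n) ℝ) : Set (Fin m → ℝ) := {y | ∀ i, |colDot A i y| ≤ 1}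

/-- `F` is a face of `C`: the argmax set of a linear functional over `C`. -/
def IsFaceOf (C F : Set (Fin m → ℝ)) : Prop :=
  ∃ v : Fin m → ℝ, F = {y | y ∈ C ∧ ∀ z ∈ C, ∑ k, v k * z k ≤ ∑ k, v k * y k}

/-- `𝒜⁺(F)`. -/
def Aplus (A : Matrix (Fin m) (Fin n) ℝ) (F : Set (Fin m → ℝ)) : Set (Fin n) :=
  {i | ∀ y ∈ F, colDot A i y = 1}

/-- `𝒜⁻(F)`. -/
def Aminus (A : Matrix (Fin m) (Fin n) ℝ) (F : Set (Fin m → ℝ)) : Set (Fin n) :=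
  {i | ∀ y ∈ F, colDot A i y = -1}

/-- `𝒜⁰(F)`. -/
def Azero (A : Matrix (Fin m) (Fin n) ℝ) (F : Set (Fin m → ℝ)) : Set (Fin n) :=
  {i | ∃ y ∈ F, -1 < colDot A i y ∧ colDot A i y < 1}

/-- Solution set of the extended ℓ₁ regularization problem:
basis pursuit when `lam = 0`, Lasso-type problem when `lam > 0`. -/
def Sol (A : Matrix (Fin m) (Fin n) ℝ) (lam : ℝ) (b : Fin m → ℝ) : Set (Fin n → ℝ) :=
  if lam = 0 then
    {x | A.mulVec x = b ∧ ∀ z, A.mulVec z = b → l1 x ≤ l1 z}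
  else
    {x | ∀ z, l1 x + 1 / (2 * lam) * sqnorm (A.mulVec x - b) ≤
          l1 z + 1 / (2 * lam) * sqnorm (A.mulVec z - b)}

/-- Graph of the solution multifunction `S`. -/
def gphS (A : Matrix (Fin m) (Fin n) ℝ) : Set (ℝ × (Fin m → ℝ) × (Fin n → ℝ)) :=
  {p | 0 ≤ p.1 ∧ p.2.2 ∈ Sol A p.1 p.2.1}

/-- `A_iᵀ(b − Ax)`. -/
def resid (A : Matrix (Fin m) (Fin n) ℝ) (b : Fin m → ℝ) (x : Fin n → ℝ) (i : Fin n) : ℝ :=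
  colDot A i (b - A.mulVec x)

/-- The polyhedral cone `S_F` associated with a face `F` of `Y⁰`. -/
def SFace (A : Matrix (Fin m) (Fin n) ℝ) (F : Set (Fin m → ℝ)) :
    Set (ℝ × (Fin m → ℝ) × (Fin n → ℝ)) :=
  {p | 0 ≤ p.1 ∧
    (∀ i ∈ Aplus A F, 0 ≤ p.2.2 i ∧ resid A p.2.1 p.2.2 i = p.1) ∧
    (∀ i ∈ Azero A F, p.2.2 i = 0 ∧ |resid A p.2.1 p.2.2 i| ≤ p.1) ∧
    (∀ i ∈ Aminus A F, p.2.2 i ≤ 0 ∧ resid A p.2.1 p.2.2 i = -p.1)}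

/-- `cl W(I⁺, I⁰, I⁻)`. -/
def clW (Ip I0 Im : Set (Fin n)) : Set (Fin n → ℝ) :=
  {x | (∀ i ∈ Ip, 0 ≤ x i) ∧ (∀ i ∈ I0, x i = 0) ∧ (∀ i ∈ Im, x i ≤ 0)}

/-- `W(I⁺, I⁰, I⁻)`. -/
def Wset (Ip I0 Im : Set (Fin n)) : Set (Fin n → ℝ) :=
  {x | (∀ i ∈ Ip, 0 < x i) ∧ (∀ i ∈ I0, x i = 0) ∧ (∀ i ∈ Im, x i < 0)}

/-- The projection `D_F` of `S_F` onto the `(λ, b)` coordinates. -/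
def DFace (A : Matrix (Fin m) (Fin n) ℝ) (F : Set (Fin m → ℝ)) : Set (ℝ × (Fin m → ℝ)) :=
  (fun p => (p.1, p.2.1)) '' SFace A F

/-- The convex subdifferential of the ℓ₁ norm. -/
def l1subdiff {k : ℕ} (x : Fin k → ℝ) : Set (Fin k → ℝ) :=
  {v | ∀ z, l1 x + ∑ i, v i * (z i - x i) ≤ l1 z}

/-- Polyhedral subset of `ℝ × ℝ^m × ℝ^n`: a finite intersection of closed half-spaces. -/
def IsPolyhedral3 (s : Set (ℝ × (Fin m → ℝ) × (Fin n → ℝ))) : Prop :=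
  ∃ (k : ℕ) (a : Fin k → ℝ × (Fin m → ℝ) × (Fin n → ℝ)) (β : Fin k → ℝ),
    s = {p | ∀ j, (a j).1 * p.1 + (∑ t, (a j).2.1 t * p.2.1 t) +
          (∑ t, (a j).2.2 t * p.2.2 t) ≤ β j}

/-- Lipschitz continuity of a set-valued map on a set `X`, with constant `κ`. -/
def LipOn {a b : ℕ} (G : (Fin a → ℝ) → Set (Fin b → ℝ)) (X : Set (Fin a → ℝ)) (κ : ℝ) : Prop :=
  (∀ x ∈ X, (G x).Nonempty ∧ IsClosed (G x)) ∧
  ∀ x ∈ X, ∀ x' ∈ X, ∀ y' ∈ G x', ∃ y ∈ G x, en y' y ≤ κ * en x' x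

end

section StmtAux

open Finset

variable {m n : ℕ}

lemma colDot_sub' (A : Matrix (Fin m) (Fin n) ℝ) (i : Fin n) (w w' : Fin m → ℝ) :
    colDot A i (w - w') = colDot A i w - colDot A i w' := by
  simp only [colDot, Pi.sub_apply, mul_sub]
  rw [Finset.sum_sub_distrib]

lemma sum_colDot_mul' (A : Matrix (Fin m) (Fin n) ℝ) (w : Fin m → ℝ) (d : Fin n → ℝ) :
    ∑ i, colDot A i w * d i = ∑ k, w k * A.mulVec d k := by
  simp only [colDot, Matrix.mulVec, dotProduct, Finset.sum_mul, Finset.mul_sum]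
  rw [Finset.sum_comm]
  exact Finset.sum_congr rfl fun k _ => Finset.sum_congr rfl fun i _ => by ring

lemma colDot_mulVec' (A : Matrix (Fin m) (Fin n) ℝ) (i : Fin n) (x : Fin n → ℝ) :
    colDot A i (A.mulVec x) = ∑ j, (∑ k, A k i * A k j) * x j := by
  simp only [colDot, Matrix.mulVec, dotProduct, Finset.mul_sum, Finset.sum_mul]
  rw [Finset.sum_comm]
  exact Finset.sum_congr rfl fun j _ => Finset.sum_congr rfl fun k _ => by ring

lemma sqnorm_nonneg' (v : Fin m → ℝ) : 0 ≤ sqnorm v :=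
  Finset.sum_nonneg fun i _ => sq_nonneg _

lemma eq_zero_of_sqnorm' (v : Fin m → ℝ) (h : sqnorm v ≤ 0) : v = 0 := by
  have h0 : sqnorm v = 0 := le_antisymm h (sqnorm_nonneg' v)
  funext k
  have := (Finset.sum_eq_zero_iff_of_nonneg (fun i _ => sq_nonneg (v i))).mp h0 k (mem_univ k)
  have := pow_eq_zero_iff (two_ne_zero) |>.mp this
  simpa using this

lemma sqnorm_add' (p q : Fin m → ℝ) :
    sqnorm (p + q) = sqnorm p + 2 * (∑ k, p k * q k) + sqnorm q := by
  simp only [sqnorm, Pi.add_apply, Finset.mul_sum, ← Finset.sum_add_distrib]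
  exact Finset.sum_congr rfl fun k _ => by ring

lemma colDot_comb' (A : Matrix (Fin m) (Fin n) ℝ) (i : Fin n) (a b : ℝ) (y z : Fin m → ℝ) :
    colDot A i (a • y + b • z) = a * colDot A i y + b * colDot A i z := by
  simp only [colDot, Pi.add_apply, Pi.smul_apply, smul_eq_mul, Finset.mul_sum,
    ← Finset.sum_add_distrib]
  exact Finset.sum_congr rfl fun k _ => by ring

lemma convex_Ydual' (A : Matrix (Fin m) (Fin n) ℝ) : Convex ℝ (Ydual A) := by
  intro y hy z hz a b ha hb hab
  intro i
  rw [colDot_comb']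
  calc |a * colDot A i y + b * colDot A i z|
      ≤ |a * colDot A i y| + |b * colDot A i z| := abs_add_le _ _
    _ = a * |colDot A i y| + b * |colDot A i z| := by
        rw [abs_mul, abs_mul, abs_of_nonneg ha, abs_of_nonneg hb]
    _ ≤ a * 1 + b * 1 :=
        add_le_add (mul_le_mul_of_nonneg_left (hy i) ha) (mul_le_mul_of_nonneg_left (hz i) hb)
    _ = 1 := by rw [mul_one, mul_one, hab]

lemma convex_face' {A : Matrix (Fin m) (Fin n) ℝ} {F : Set (Fin m → ℝ)}
    (h : IsFaceOf (Ydual A) F) : Convex ℝ F := by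
  obtain ⟨v, rfl⟩ := h
  intro y hy z hz a b ha hb hab
  refine ⟨convex_Ydual' A hy.1 hz.1 ha hb hab, fun w hw => ?_⟩
  have hyw := hy.2 w hw
  have hzw := hz.2 w hw
  have hcomb : ∑ k, v k * (a • y + b • z) k =
      a * ∑ k, v k * y k + b * ∑ k, v k * z k := by
    simp only [Pi.add_apply, Pi.smul_apply, smul_eq_mul, Finset.mul_sum,
      ← Finset.sum_add_distrib]
    exact Finset.sum_congr rfl fun k _ => by ring
  rw [hcomb]
  have hw' : a * ∑ k, v k * w k + b * ∑ k, v k * w k = ∑ k, v k * w k := by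
    rw [← add_mul, hab, one_mul]
  linarith [mul_le_mul_of_nonneg_left hyw ha, mul_le_mul_of_nonneg_left hzw hb]

lemma tri' (A : Matrix (Fin m) (Fin n) ℝ) (F : Set (Fin m → ℝ))
    (hconv : Convex ℝ F) (hsub : F ⊆ Ydual A) :
    ∀ i, i ∈ Aplus A F ∨ i ∈ Azero A F ∨ i ∈ Aminus A F := by
  intro i
  by_cases hp : i ∈ Aplus A F
  · exact Or.inl hp
  by_cases hm : i ∈ Aminus A F
  · exact Or.inr (Or.inr hm)
  refine Or.inr (Or.inl ?_)
  simp only [Aplus, Set.mem_setOf_eq] at hp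
  simp only [Aminus, Set.mem_setOf_eq] at hm
  push_neg at hp hm
  obtain ⟨y1, hy1F, hy1⟩ := hp
  obtain ⟨y2, hy2F, hy2⟩ := hm
  have b1 := hsub hy1F i
  have b2 := hsub hy2F i
  rw [abs_le] at b1 b2
  by_cases h1 : colDot A i y1 = -1
  · by_cases h2 : colDot A i y2 = 1
    · refine ⟨(1/2:ℝ) • y1 + (1/2:ℝ) • y2,
        hconv hy1F hy2F (by norm_num) (by norm_num) (by norm_num), ?_⟩
      rw [colDot_comb', h1, h2]
      norm_num
    · exact ⟨y2, hy2F, lt_of_le_of_ne b2.1 (Ne.symm hy2), lt_of_le_of_ne b2.2 h2⟩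
  · exact ⟨y1, hy1F, lt_of_le_of_ne b1.1 (Ne.symm h1), lt_of_le_of_ne b1.2 hy1⟩

lemma not_zero_plus' {A : Matrix (Fin m) (Fin n) ℝ} {F : Set (Fin m → ℝ)} {i : Fin n}
    (h0 : i ∈ Azero A F) (hp : i ∈ Aplus A F) : False := by
  obtain ⟨y, hyF, h1, h2⟩ := h0
  have := hp y hyF
  linarith

lemma not_zero_minus' {A : Matrix (Fin m) (Fin n) ℝ} {F : Set (Fin m → ℝ)} {i : Fin n}
    (h0 : i ∈ Azero A F) (hmi : i ∈ Aminus A F) : False := by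
  obtain ⟨y, hyF, h1, h2⟩ := h0
  have := hmi y hyF
  linarith

lemma not_plus_minus' {A : Matrix (Fin m) (Fin n) ℝ} {F : Set (Fin m → ℝ)} {i : Fin n}
    (hne : F.Nonempty) (hp : i ∈ Aplus A F) (hmi : i ∈ Aminus A F) : False := by
  obtain ⟨y, hy⟩ := hne
  have := hp y hy
  have := hmi y hy
  linarith

lemma exists_good' (A : Matrix (Fin m) (Fin n) ℝ) (F : Set (Fin m → ℝ))
    (hconv : Convex ℝ F) (hsub : F ⊆ Ydual A) (hne : F.Nonempty) :
    ∃ y ∈ F, ∀ i ∈ Azero A F, |colDot A i y| < 1 := by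
  classical
  suffices h : ∀ s : Finset (Fin n), (∀ i ∈ s, i ∈ Azero A F) →
      ∃ y ∈ F, ∀ i ∈ s, |colDot A i y| < 1 by
    obtain ⟨y, hy, h'⟩ := h (Finset.univ.filter (· ∈ Azero A F)) (by
      intro i hi
      simpa using (Finset.mem_filter.mp hi).2)
    refine ⟨y, hy, fun i hi => h' i ?_⟩
    simp [Finset.mem_filter, hi]
  intro s
  induction s using Finset.induction with
  | empty =>
      intro _
      obtain ⟨y, hy⟩ := hne
      exact ⟨y, hy, by simp⟩
  | @insert i s his ih =>
      intro hs
      obtain ⟨y, hyF, hy⟩ := ih (fun j hj => hs j (Finset.mem_insert_of_mem hj))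
      obtain ⟨w, hwF, hw1, hw2⟩ := hs i (Finset.mem_insert_self i s)
      refine ⟨(1/2:ℝ) • y + (1/2:ℝ) • w,
        hconv hyF hwF (by norm_num) (by norm_num) (by norm_num), ?_⟩
      intro j hj
      rw [colDot_comb']
      rcases Finset.mem_insert.mp hj with rfl | hj
      · have h1 : |colDot A j y| ≤ 1 := hsub hyF j
        have h2 : |colDot A j w| < 1 := abs_lt.mpr ⟨hw1, hw2⟩
        have habs : |1/2 * colDot A j y + 1/2 * colDot A j w| ≤
            1/2 * |colDot A j y| + 1/2 * |colDot A j w| := by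
          refine (abs_add_le _ _).trans ?_
          simp only [abs_mul, abs_of_nonneg (by norm_num : (0:ℝ) ≤ 1/2)]
          exact le_rfl
        linarith
      · have h1 : |colDot A j y| < 1 := hy j hj
        have h2 : |colDot A j w| ≤ 1 := hsub hwF j
        have habs : |1/2 * colDot A j y + 1/2 * colDot A j w| ≤
            1/2 * |colDot A j y| + 1/2 * |colDot A j w| := by
          refine (abs_add_le _ _).trans ?_
          simp only [abs_mul, abs_of_nonneg (by norm_num : (0:ℝ) ≤ 1/2)]
          exact le_rfl
        linarith

end StmtAux

section StmtAux2

open Finset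

variable {m n : ℕ}

lemma li_zero' (A : Matrix (Fin m) (Fin n) ℝ) (F : Set (Fin m → ℝ))
    (hli : LinearIndependent ℝ
      (fun i : ↥(Aplus A F ∪ Aminus A F) => fun k => A k i.1))
    (htri : ∀ i, i ∈ Aplus A F ∨ i ∈ Azero A F ∨ i ∈ Aminus A F)
    (d : Fin n → ℝ) (hd0 : ∀ i ∈ Azero A F, d i = 0)
    (hAd : A.mulVec d = 0) : d = 0 := by
  classical
  have key : ∀ i : ↥(Aplus A F ∪ Aminus A F), d i.1 = 0 := by
    apply Fintype.linearIndependent_iff.mp hli (fun i => d i.1)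
    funext k
    simp only [Finset.sum_apply, Pi.smul_apply, smul_eq_mul, Pi.zero_apply]
    rw [Finset.sum_set_coe (f := fun i => d i * A k i)]
    rw [Finset.sum_subset (Finset.subset_univ _)]
    · have := congrFun hAd k
      simp only [Matrix.mulVec, dotProduct, Pi.zero_apply] at this
      rw [← this]
      exact Finset.sum_congr rfl fun i _ => mul_comm _ _
    · intro i _ hi
      have hi' : i ∈ Azero A F := by
        rcases htri i with h | h | h
        · exact (hi (Set.mem_toFinset.mpr (Or.inl h))).elim
        · exact h
        · exact (hi (Set.mem_toFinset.mpr (Or.inr h))).elim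
      rw [hd0 i hi', zero_mul]
  funext i
  rcases htri i with h | h | h
  · simpa using key ⟨i, Or.inl h⟩
  · simpa using hd0 i h
  · simpa using key ⟨i, Or.inr h⟩

lemma d_eq_zero' (A : Matrix (Fin m) (Fin n) ℝ) (F : Set (Fin m → ℝ))
    (hli : LinearIndependent ℝ
      (fun i : ↥(Aplus A F ∪ Aminus A F) => fun k => A k i.1))
    (htri : ∀ i, i ∈ Aplus A F ∨ i ∈ Azero A F ∨ i ∈ Aminus A F)
    (d : Fin n → ℝ) (hd0 : ∀ i ∈ Azero A F, d i = 0)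
    (hcd : ∀ i ∈ Aplus A F ∪ Aminus A F, colDot A i (A.mulVec d) = 0) : d = 0 := by
  have hAd : A.mulVec d = 0 := by
    apply eq_zero_of_sqnorm'
    have hs : sqnorm (A.mulVec d) = ∑ i, colDot A i (A.mulVec d) * d i := by
      rw [sum_colDot_mul']
      exact Finset.sum_congr rfl fun k _ => by rw [sq]
    rw [hs]
    apply le_of_eq
    apply Finset.sum_eq_zero
    intro i _
    by_cases h : i ∈ Aplus A F ∪ Aminus A F
    · rw [hcd i h, zero_mul]
    · have hi' : i ∈ Azero A F := by
        rcases htri i with h' | h' | h'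
        · exact absurd (Or.inl h') h
        · exact h'
        · exact absurd (Or.inr h') h
      rw [hd0 i hi', mul_zero]
  exact li_zero' A F hli htri d hd0 hAd

lemma rank_inj' (A : Matrix (Fin m) (Fin n) ℝ) (hrank : A.rank = m) (w : Fin m → ℝ)
    (hw : ∀ i, colDot A i w = 0) : w = 0 := by
  have hrows : LinearIndependent ℝ (fun k : Fin m => A k) := by
    apply linearIndependent_iff_card_eq_finrank_span.mpr
    have h := A.rank_eq_finrank_span_row
    rw [hrank] at h
    rw [Set.finrank, Fintype.card_fin]
    exact h
  have hinj : Function.Injective A.vecMul := Matrix.vecMul_injective_iff.mpr hrows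
  have h0 : A.vecMul w = A.vecMul 0 := by
    funext i
    have hwi := hw i
    simp only [colDot] at hwi
    simp only [Matrix.vecMul, dotProduct, Pi.zero_apply, zero_mul,
      Finset.sum_const_zero]
    rw [← hwi]
    exact Finset.sum_congr rfl fun k _ => mul_comm _ _
  exact hinj h0

lemma unique_aux' (A : Matrix (Fin m) (Fin n) ℝ) (F : Set (Fin m → ℝ))
    (hli : LinearIndependent ℝ
      (fun i : ↥(Aplus A F ∪ Aminus A F) => fun k => A k i.1))
    (htri : ∀ i, i ∈ Aplus A F ∨ i ∈ Azero A F ∨ i ∈ Aminus A F)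
    (y : Fin m → ℝ)
    (hy1 : ∀ i ∈ Aplus A F, colDot A i y = 1)
    (hy2 : ∀ i ∈ Aminus A F, colDot A i y = -1)
    (hy0 : ∀ i ∈ Azero A F, |colDot A i y| < 1)
    (x z : Fin n → ℝ)
    (hxp : ∀ i ∈ Aplus A F, 0 ≤ x i) (hx0 : ∀ i ∈ Azero A F, x i = 0)
    (hxm : ∀ i ∈ Aminus A F, x i ≤ 0)
    (hAz : A.mulVec z = A.mulVec x) (hl1 : l1 z = l1 x) : z = x := by
  have huabs : ∀ i, |colDot A i y| ≤ 1 := by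
    intro i
    rcases htri i with h | h | h
    · rw [hy1 i h]; norm_num
    · exact le_of_lt (hy0 i h)
    · rw [hy2 i h]; norm_num
  have hux : ∑ i, colDot A i y * x i = l1 x := by
    unfold l1
    refine Finset.sum_congr rfl fun i _ => ?_
    rcases htri i with h | h | h
    · rw [hy1 i h, one_mul, abs_of_nonneg (hxp i h)]
    · rw [hx0 i h, mul_zero, abs_zero]
    · rw [hy2 i h, abs_of_nonpos (hxm i h)]; ring
  have hsum_eq : ∑ i, colDot A i y * z i = ∑ i, colDot A i y * x i := by
    rw [sum_colDot_mul', sum_colDot_mul', hAz]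
  have hsum_z : ∑ i, colDot A i y * z i = ∑ i, |z i| := by
    rw [hsum_eq, hux, ← hl1]; rfl
  have hterm : ∀ i ∈ Finset.univ (α := Fin n), colDot A i y * z i ≤ |z i| := by
    intro i _
    calc colDot A i y * z i ≤ |colDot A i y * z i| := le_abs_self _
      _ = |colDot A i y| * |z i| := abs_mul _ _
      _ ≤ 1 * |z i| := mul_le_mul_of_nonneg_right (huabs i) (abs_nonneg _)
      _ = |z i| := one_mul _
  have heach : ∀ i, colDot A i y * z i = |z i| := by
    by_contra hcon
    push_neg at hcon
    obtain ⟨i0, hi0⟩ := hcon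
    have hlt : ∑ i, colDot A i y * z i < ∑ i, |z i| :=
      Finset.sum_lt_sum hterm ⟨i0, Finset.mem_univ i0, lt_of_le_of_ne (hterm i0 (Finset.mem_univ i0)) hi0⟩
    rw [hsum_z] at hlt
    exact lt_irrefl _ hlt
  have hz0 : ∀ i ∈ Azero A F, z i = 0 := by
    intro i hi
    by_contra hzi
    have h1 : |z i| = colDot A i y * z i := (heach i).symm
    have h2 : colDot A i y * z i ≤ |colDot A i y| * |z i| :=
      (le_abs_self _).trans (le_of_eq (abs_mul _ _))
    have h3 : |colDot A i y| * |z i| < 1 * |z i| :=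
      mul_lt_mul_of_pos_right (hy0 i hi) (abs_pos.mpr hzi)
    rw [one_mul] at h3
    linarith
  have hdz : z - x = 0 := by
    apply li_zero' A F hli htri
    · intro i hi
      simp [hz0 i hi, hx0 i hi]
    · rw [Matrix.mulVec_sub, hAz, sub_self]
  funext i
  have := congrFun hdz i
  simp only [Pi.sub_apply, Pi.zero_apply] at this
  linarith

end StmtAux2

section StmtAux3

open Finset

variable {m n : ℕ}

lemma lasso_main' (A : Matrix (Fin m) (Fin n) ℝ) {lam : ℝ} {b : Fin m → ℝ} {x : Fin n → ℝ}
    (hlam : 0 < lam)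
    (hrabs : ∀ i, |resid A b x i| ≤ lam)
    (hrx : ∀ i, resid A b x i * x i = lam * |x i|) :
    ∀ z, lam * (l1 x + 1 / (2 * lam) * sqnorm (A.mulVec x - b))
        + (1/2) * sqnorm (A.mulVec z - A.mulVec x)
        ≤ lam * (l1 z + 1 / (2 * lam) * sqnorm (A.mulVec z - b)) := by
  intro z
  have hlam' : lam ≠ 0 := ne_of_gt hlam
  have h1 : ∑ i, resid A b x i * z i ≤ lam * l1 z := by
    unfold l1
    rw [Finset.mul_sum]
    refine Finset.sum_le_sum fun i _ => ?_
    calc resid A b x i * z i ≤ |resid A b x i * z i| := le_abs_self _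
      _ = |resid A b x i| * |z i| := abs_mul _ _
      _ ≤ lam * |z i| := mul_le_mul_of_nonneg_right (hrabs i) (abs_nonneg _)
  have h2 : ∑ i, resid A b x i * x i = lam * l1 x := by
    unfold l1
    rw [Finset.mul_sum]
    exact Finset.sum_congr rfl fun i _ => hrx i
  have e0 : A.mulVec (z - x) = A.mulVec z - A.mulVec x := Matrix.mulVec_sub A z x
  have h3 : ∑ i, resid A b x i * (z i - x i)
      = ∑ k, (b - A.mulVec x) k * (A.mulVec z - A.mulVec x) k := by
    have h := sum_colDot_mul' A (b - A.mulVec x) (z - x)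
    rw [e0] at h
    calc ∑ i, resid A b x i * (z i - x i)
        = ∑ i, colDot A i (b - A.mulVec x) * (z - x) i := rfl
      _ = _ := h
  have h4 : sqnorm (A.mulVec z - b) = sqnorm (A.mulVec x - b)
      - 2 * ∑ k, (b - A.mulVec x) k * (A.mulVec z - A.mulVec x) k
      + sqnorm (A.mulVec z - A.mulVec x) := by
    have e : A.mulVec z - b = (A.mulVec x - b) + (A.mulVec z - A.mulVec x) := by abel
    rw [e, sqnorm_add']
    have e2 : ∑ k, (A.mulVec x - b) k * (A.mulVec z - A.mulVec x) k
        = - ∑ k, (b - A.mulVec x) k * (A.mulVec z - A.mulVec x) k := by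
      rw [← Finset.sum_neg_distrib]
      refine Finset.sum_congr rfl fun k _ => ?_
      simp only [Pi.sub_apply]
      ring
    rw [e2]
    ring
  have h5 : ∑ i, resid A b x i * (z i - x i)
      = ∑ i, resid A b x i * z i - ∑ i, resid A b x i * x i := by
    rw [← Finset.sum_sub_distrib]
    exact Finset.sum_congr rfl fun i _ => by ring
  have e1 : lam * (l1 z + 1 / (2 * lam) * sqnorm (A.mulVec z - b))
      = lam * l1 z + (1/2) * sqnorm (A.mulVec z - b) := by
    field_simp
  have e2 : lam * (l1 x + 1 / (2 * lam) * sqnorm (A.mulVec x - b))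
      = lam * l1 x + (1/2) * sqnorm (A.mulVec x - b) := by
    field_simp
  rw [e1, e2, h4]
  linarith [h1, h2, h3, h5]

lemma sol_singleton' (A : Matrix (Fin m) (Fin n) ℝ) (F : Set (Fin m → ℝ))
    (hrank : A.rank = m) (hconv : Convex ℝ F) (hsub : F ⊆ Ydual A) (hne : F.Nonempty)
    (hli : LinearIndependent ℝ
      (fun i : ↥(Aplus A F ∪ Aminus A F) => fun k => A k i.1))
    {lam : ℝ} {b : Fin m → ℝ} {x : Fin n → ℝ}
    (hmem : (lam, b, x) ∈ SFace A F) : Sol A lam b = {x} := by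
  obtain ⟨hlam0, hP, hZ, hM⟩ := hmem
  have htri := tri' A F hconv hsub
  obtain ⟨y, hyF, hy0⟩ := exists_good' A F hconv hsub hne
  have hy1 : ∀ i ∈ Aplus A F, colDot A i y = 1 := fun i hi => hi y hyF
  have hy2 : ∀ i ∈ Aminus A F, colDot A i y = -1 := fun i hi => hi y hyF
  have hxp : ∀ i ∈ Aplus A F, 0 ≤ x i := fun i hi => (hP i hi).1
  have hx0 : ∀ i ∈ Azero A F, x i = 0 := fun i hi => (hZ i hi).1
  have hxm : ∀ i ∈ Aminus A F, x i ≤ 0 := fun i hi => (hM i hi).1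
  have huabs : ∀ i, |colDot A i y| ≤ 1 := fun i => hsub hyF i
  have hux : ∑ i, colDot A i y * x i = l1 x := by
    unfold l1
    refine Finset.sum_congr rfl fun i _ => ?_
    rcases htri i with h | h | h
    · rw [hy1 i h, one_mul, abs_of_nonneg (hxp i h)]
    · rw [hx0 i h, mul_zero, abs_zero]
    · rw [hy2 i h, abs_of_nonpos (hxm i h)]; ring
  have hle : ∀ w : Fin n → ℝ, ∑ i, colDot A i y * w i ≤ l1 w := by
    intro w
    unfold l1
    refine Finset.sum_le_sum fun i _ => ?_
    calc colDot A i y * w i ≤ |colDot A i y * w i| := le_abs_self _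
      _ = |colDot A i y| * |w i| := abs_mul _ _
      _ ≤ 1 * |w i| := mul_le_mul_of_nonneg_right (huabs i) (abs_nonneg _)
      _ = |w i| := one_mul _
  have huniq : ∀ z, A.mulVec z = A.mulVec x → l1 z = l1 x → z = x :=
    fun z => unique_aux' A F hli htri y hy1 hy2 hy0 x z hxp hx0 hxm
  rcases eq_or_lt_of_le hlam0 with hlam | hlam
  · -- lam = 0
    have hres : ∀ i, resid A b x i = 0 := by
      intro i
      rcases htri i with h | h | h
      · rw [(hP i h).2, ← hlam]
      · have h2 := (hZ i h).2
        rw [← hlam] at h2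
        exact abs_nonpos_iff.mp h2
      · rw [(hM i h).2, ← hlam, neg_zero]
    have hAxb : A.mulVec x = b := by
      have h0 : b - A.mulVec x = 0 := rank_inj' A hrank _ (fun i => hres i)
      exact (sub_eq_zero.mp h0).symm
    have hkey : ∀ w, A.mulVec w = b → l1 x ≤ l1 w := by
      intro w hw
      have hh : ∑ i, colDot A i y * x i = ∑ i, colDot A i y * w i := by
        rw [sum_colDot_mul', sum_colDot_mul', hAxb, hw]
      rw [← hux, hh]
      exact hle w
    rw [Sol, if_pos hlam.symm]
    ext z
    simp only [Set.mem_setOf_eq, Set.mem_singleton_iff]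
    constructor
    · rintro ⟨hzb, hzmin⟩
      apply huniq z (hzb.trans hAxb.symm)
      have h1 : l1 z ≤ l1 x := hzmin x hAxb
      have h2 : l1 x ≤ l1 z := hkey z hzb
      linarith
    · rintro rfl
      exact ⟨hAxb, hkey⟩
  · -- lam > 0
    have hrabs : ∀ i, |resid A b x i| ≤ lam := by
      intro i
      rcases htri i with h | h | h
      · rw [(hP i h).2, abs_of_nonneg hlam0]
      · exact (hZ i h).2
      · rw [(hM i h).2, abs_neg, abs_of_nonneg hlam0]
    have hrx : ∀ i, resid A b x i * x i = lam * |x i| := by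
      intro i
      rcases htri i with h | h | h
      · rw [(hP i h).2, abs_of_nonneg (hxp i h)]
      · rw [hx0 i h, mul_zero, abs_zero, mul_zero]
      · rw [(hM i h).2, abs_of_nonpos (hxm i h)]; ring
    have main := lasso_main' A hlam hrabs hrx
    rw [Sol, if_neg (ne_of_gt hlam)]
    ext z
    simp only [Set.mem_setOf_eq, Set.mem_singleton_iff]
    constructor
    · intro hz
      have hzx := hz x
      have hAz : A.mulVec z = A.mulVec x := by
        have h1 := main z
        have h2 : lam * (l1 z + 1 / (2 * lam) * sqnorm (A.mulVec z - b))
            ≤ lam * (l1 x + 1 / (2 * lam) * sqnorm (A.mulVec x - b)) :=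
          mul_le_mul_of_nonneg_left hzx (le_of_lt hlam)
        have h3 : sqnorm (A.mulVec z - A.mulVec x) ≤ 0 := by linarith
        exact sub_eq_zero.mp (eq_zero_of_sqnorm' _ h3)
      have hl1 : l1 z = l1 x := by
        have h1 := main z
        rw [hAz] at h1 hzx
        have hz0 : sqnorm (A.mulVec x - A.mulVec x) = 0 := by
          simp [sqnorm, sub_self]
        rw [hz0] at h1
        have h5 : lam * (l1 x + 1 / (2 * lam) * sqnorm (A.mulVec x - b))
            ≤ lam * (l1 z + 1 / (2 * lam) * sqnorm (A.mulVec x - b)) := by linarith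
        have h6 := le_of_mul_le_mul_left h5 hlam
        have hxz : l1 x ≤ l1 z := by linarith
        have hzx' : l1 z ≤ l1 x := by linarith
        linarith
      exact huniq z hAz hl1
    · rintro rfl
      intro w
      have h1 := main w
      have hs := sqnorm_nonneg' (A.mulVec w - A.mulVec z)
      have h2 : lam * (l1 z + 1 / (2 * lam) * sqnorm (A.mulVec z - b))
          ≤ lam * (l1 w + 1 / (2 * lam) * sqnorm (A.mulVec w - b)) := by linarith
      exact le_of_mul_le_mul_left h2 hlam

end StmtAux3

section StmtAux4

open Finset Matrix
open scoped Classical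

variable {m n : ℕ}

lemma face_subset' {C F : Set (Fin m → ℝ)} (h : IsFaceOf C F) : F ⊆ C := by
  obtain ⟨v, rfl⟩ := h
  exact fun y hy => hy.1

lemma colDot_add' (A : Matrix (Fin m) (Fin n) ℝ) (i : Fin n) (w w' : Fin m → ℝ) :
    colDot A i (w + w') = colDot A i w + colDot A i w' := by
  simp only [colDot, Pi.add_apply, mul_add]
  exact Finset.sum_add_distrib

lemma colDot_smul' (A : Matrix (Fin m) (Fin n) ℝ) (i : Fin n) (c : ℝ) (w : Fin m → ℝ) :
    colDot A i (c • w) = c * colDot A i w := by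
  simp only [colDot, Pi.smul_apply, smul_eq_mul, Finset.mul_sum]
  exact Finset.sum_congr rfl fun k _ => by ring

noncomputable def gramM (A : Matrix (Fin m) (Fin n) ℝ) (F : Set (Fin m → ℝ)) :
    Matrix ↥(Aplus A F ∪ Aminus A F) ↥(Aplus A F ∪ Aminus A F) ℝ :=
  Matrix.of fun i j => ∑ k, A k i.1 * A k j.1

noncomputable def rhsV (A : Matrix (Fin m) (Fin n) ℝ) (F : Set (Fin m → ℝ))
    (q : ℝ × (Fin m → ℝ)) : ↥(Aplus A F ∪ Aminus A F) → ℝ :=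
  fun i => colDot A i.1 q.2 - (if i.1 ∈ Aplus A F then (1:ℝ) else -1) * q.1

noncomputable def solFun (A : Matrix (Fin m) (Fin n) ℝ) (F : Set (Fin m → ℝ))
    (q : ℝ × (Fin m → ℝ)) : Fin n → ℝ :=
  fun j => if h : j ∈ Aplus A F ∪ Aminus A F
    then ((gramM A F)⁻¹ *ᵥ rhsV A F q) ⟨j, h⟩ else 0

lemma rhsV_add (A : Matrix (Fin m) (Fin n) ℝ) (F : Set (Fin m → ℝ))
    (q q' : ℝ × (Fin m → ℝ)) : rhsV A F (q + q') = rhsV A F q + rhsV A F q' := by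
  funext i
  simp only [rhsV, Prod.fst_add, Prod.snd_add, Pi.add_apply, colDot_add']
  ring

lemma rhsV_smul (A : Matrix (Fin m) (Fin n) ℝ) (F : Set (Fin m → ℝ))
    (c : ℝ) (q : ℝ × (Fin m → ℝ)) : rhsV A F (c • q) = c • rhsV A F q := by
  funext i
  simp only [rhsV, Prod.smul_fst, Prod.smul_snd, Pi.smul_apply, colDot_smul', smul_eq_mul]
  ring

noncomputable def solT (A : Matrix (Fin m) (Fin n) ℝ) (F : Set (Fin m → ℝ)) :
    (ℝ × (Fin m → ℝ)) →ₗ[ℝ] (Fin n → ℝ) where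
  toFun := solFun A F
  map_add' q q' := by
    funext j
    simp only [solFun]
    rw [rhsV_add, Matrix.mulVec_add]
    by_cases h : j ∈ Aplus A F ∪ Aminus A F
    · simp [solFun, h]
    · simp [solFun, h]
  map_smul' c q := by
    funext j
    simp only [solFun, RingHom.id_apply]
    rw [rhsV_smul, Matrix.mulVec_smul]
    by_cases h : j ∈ Aplus A F ∪ Aminus A F
    · simp [solFun, h]
    · simp [solFun, h]

lemma gram_isUnit (A : Matrix (Fin m) (Fin n) ℝ) (F : Set (Fin m → ℝ))
    (hli : LinearIndependent ℝ
      (fun i : ↥(Aplus A F ∪ Aminus A F) => fun k => A k i.1))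
    (htri : ∀ i, i ∈ Aplus A F ∨ i ∈ Azero A F ∨ i ∈ Aminus A F) :
    IsUnit (gramM A F) := by
  rw [← Matrix.mulVec_injective_iff_isUnit]
  intro u v huv
  have h0 : gramM A F *ᵥ (u - v) = 0 := by
    rw [Matrix.mulVec_sub, huv, sub_self]
  set w := u - v with hw
  set d : Fin n → ℝ :=
    fun j => if h : j ∈ Aplus A F ∪ Aminus A F then w ⟨j, h⟩ else 0 with hd
  have hd0 : ∀ i ∈ Azero A F, d i = 0 := by
    intro i hi
    have hni : i ∉ Aplus A F ∪ Aminus A F := by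
      rintro (h | h)
      exacts [not_zero_plus' hi h, not_zero_minus' hi h]
    simp only [hd]
    rw [dif_neg hni]
  have hgram : ∀ i : ↥(Aplus A F ∪ Aminus A F),
      colDot A i.1 (A.mulVec d) = (gramM A F *ᵥ w) i := by
    intro i
    rw [colDot_mulVec']
    have e1 : ∑ j, (∑ k, A k i.1 * A k j) * d j
        = ∑ j ∈ (Aplus A F ∪ Aminus A F).toFinset, (∑ k, A k i.1 * A k j) * d j := by
      symm
      apply Finset.sum_subset (Finset.subset_univ _)
      intro j _ hj
      have hj' : j ∉ Aplus A F ∪ Aminus A F := fun h => hj (Set.mem_toFinset.mpr h)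
      simp only [hd]
      rw [dif_neg hj', mul_zero]
    have e2 : ∑ j ∈ (Aplus A F ∪ Aminus A F).toFinset, (∑ k, A k i.1 * A k j) * d j
        = ∑ j : ↥(Aplus A F ∪ Aminus A F), (∑ k, A k i.1 * A k j.1) * w j := by
      rw [← Finset.sum_set_coe (f := fun j => (∑ k, A k i.1 * A k j) * d j)]
      refine Finset.sum_congr rfl fun j _ => ?_
      simp only [hd]
      rw [dif_pos j.2]
    rw [e1, e2]
    simp only [Matrix.mulVec, dotProduct, gramM, Matrix.of_apply]
  have hcd : ∀ i ∈ Aplus A F ∪ Aminus A F, colDot A i (A.mulVec d) = 0 := by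
    intro i hi
    have := hgram ⟨i, hi⟩
    rw [h0] at this
    simpa using this
  have hdz : d = 0 := d_eq_zero' A F hli htri d hd0 hcd
  have hwz : w = 0 := by
    funext j
    have := congrFun hdz j.1
    simp only [hd, Pi.zero_apply] at this ⊢
    rw [dif_pos j.2] at this
    simpa using this
  rw [hw] at hwz
  exact sub_eq_zero.mp hwz

lemma solT_eq (A : Matrix (Fin m) (Fin n) ℝ) (F : Set (Fin m → ℝ))
    (hne : F.Nonempty)
    (hli : LinearIndependent ℝ
      (fun i : ↥(Aplus A F ∪ Aminus A F) => fun k => A k i.1))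
    (htri : ∀ i, i ∈ Aplus A F ∨ i ∈ Azero A F ∨ i ∈ Aminus A F)
    {lam : ℝ} {b : Fin m → ℝ} {x : Fin n → ℝ}
    (hsysP : ∀ i ∈ Aplus A F, colDot A i (A.mulVec x) = colDot A i b - lam)
    (hsys0 : ∀ i ∈ Azero A F, x i = 0)
    (hsysM : ∀ i ∈ Aminus A F, colDot A i (A.mulVec x) = colDot A i b + lam) :
    solT A F (lam, b) = x := by
  have hxS : gramM A F *ᵥ (fun j : ↥(Aplus A F ∪ Aminus A F) => x j.1)
      = rhsV A F (lam, b) := by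
    funext i
    have e1 : (gramM A F *ᵥ fun j : ↥(Aplus A F ∪ Aminus A F) => x j.1) i
        = ∑ j : ↥(Aplus A F ∪ Aminus A F), (∑ k, A k i.1 * A k j.1) * x j.1 := by
      simp only [Matrix.mulVec, dotProduct, gramM, Matrix.of_apply]
    have e2 : ∑ j : ↥(Aplus A F ∪ Aminus A F), (∑ k, A k i.1 * A k j.1) * x j.1
        = ∑ j, (∑ k, A k i.1 * A k j) * x j := by
      rw [Finset.sum_set_coe (f := fun j => (∑ k, A k i.1 * A k j) * x j)]
      apply Finset.sum_subset (Finset.subset_univ _)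
      intro j _ hj
      have hj' : j ∈ Azero A F := by
        rcases htri j with h | h | h
        · exact ((hj (Set.mem_toFinset.mpr (Or.inl h)))).elim
        · exact h
        · exact ((hj (Set.mem_toFinset.mpr (Or.inr h)))).elim
      rw [hsys0 j hj', mul_zero]
    rw [e1, e2, ← colDot_mulVec']
    rcases i.2 with h | h
    · rw [hsysP i.1 h]
      simp only [rhsV, if_pos h]
      ring
    · have hnp : i.1 ∉ Aplus A F := fun h' => (not_plus_minus' hne h' h).elim
      rw [hsysM i.1 h]
      simp only [rhsV, if_neg hnp]
      ring
  have hu := gram_isUnit A F hli htri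
  have hdet : IsUnit (gramM A F).det := (Matrix.isUnit_iff_isUnit_det _).mp hu
  have hinv : (gramM A F)⁻¹ *ᵥ rhsV A F (lam, b)
      = fun j : ↥(Aplus A F ∪ Aminus A F) => x j.1 := by
    rw [← hxS, Matrix.mulVec_mulVec, Matrix.nonsing_inv_mul _ hdet, Matrix.one_mulVec]
  funext j
  show solFun A F (lam, b) j = x j
  unfold solFun
  by_cases h : j ∈ Aplus A F ∪ Aminus A F
  · rw [dif_pos h, hinv]
  · rw [dif_neg h]
    have hj' : j ∈ Azero A F := by
      rcases htri j with h' | h' | h'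
      · exact ((h (Or.inl h'))).elim
      · exact h'
      · exact ((h (Or.inr h'))).elim
    exact (hsys0 j hj').symm

lemma sys_of_sface (A : Matrix (Fin m) (Fin n) ℝ) (F : Set (Fin m → ℝ))
    {lam : ℝ} {b : Fin m → ℝ} {x : Fin n → ℝ}
    (hp : (lam, b, x) ∈ SFace A F) :
    (∀ i ∈ Aplus A F, colDot A i (A.mulVec x) = colDot A i b - lam) ∧
    (∀ i ∈ Azero A F, x i = 0) ∧
    (∀ i ∈ Aminus A F, colDot A i (A.mulVec x) = colDot A i b + lam) := by
  obtain ⟨hlam0, hP, hZ, hM⟩ := hp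
  refine ⟨fun i hi => ?_, fun i hi => (hZ i hi).1, fun i hi => ?_⟩
  · have h := (hP i hi).2
    have h2 : colDot A i (b - A.mulVec x) = colDot A i b - colDot A i (A.mulVec x) :=
      colDot_sub' A i b (A.mulVec x)
    have h3 : colDot A i (b - A.mulVec x) = lam := h
    linarith
  · have h := (hM i hi).2
    have h2 : colDot A i (b - A.mulVec x) = colDot A i b - colDot A i (A.mulVec x) :=
      colDot_sub' A i b (A.mulVec x)
    have h3 : colDot A i (b - A.mulVec x) = -lam := h
    linarith

end StmtAux4

theorem stmt18 {m n : ℕ} (A : Matrix (Fin m) (Fin n) ℝ) (hrank : A.rank = m)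
    (F : Set (Fin m → ℝ)) (hface : IsFaceOf (Ydual A) F) (hne : F.Nonempty)
    (hli : LinearIndependent ℝ
      (fun i : ↥(Aplus A F ∪ Aminus A F) => fun k => A k i.1)) :
    ∃ T : (ℝ × (Fin m → ℝ)) →ₗ[ℝ] (Fin n → ℝ),
      ∀ q ∈ DFace A F,
        Sol A q.1 q.2 = {T q} ∧
        ((∀ i ∈ Aplus A F, colDot A i (A.mulVec (T q)) = colDot A i q.2 - q.1) ∧
         (∀ i ∈ Azero A F, T q i = 0) ∧
         (∀ i ∈ Aminus A F, colDot A i (A.mulVec (T q)) = colDot A i q.2 + q.1)) ∧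
        ∀ x : Fin n → ℝ,
          ((∀ i ∈ Aplus A F, colDot A i (A.mulVec x) = colDot A i q.2 - q.1) ∧
           (∀ i ∈ Azero A F, x i = 0) ∧
           (∀ i ∈ Aminus A F, colDot A i (A.mulVec x) = colDot A i q.2 + q.1)) → x = T q := by
  have hconv := convex_face' hface
  have hsub := face_subset' hface
  have htri := tri' A F hconv hsub
  refine ⟨solT A F, ?_⟩
  rintro q ⟨⟨lam', b', x⟩, hp, rfl⟩
  obtain ⟨hsP, hs0, hsM⟩ := sys_of_sface A F hp
  have hTx : solT A F (lam', b') = x := solT_eq A F hne hli htri hsP hs0 hsM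
  refine ⟨?_, ?_, ?_⟩
  · rw [hTx]
    exact sol_singleton' A F hrank hconv hsub hne hli hp
  · rw [hTx]
    exact ⟨hsP, hs0, hsM⟩
  · intro x' hx'
    rw [hTx]
    have hd0 : ∀ i ∈ Azero A F, (x' - x) i = 0 := by
      intro i hi
      simp only [Pi.sub_apply]
      rw [hx'.2.1 i hi, hs0 i hi, sub_zero]
    have hcd : ∀ i ∈ Aplus A F ∪ Aminus A F, colDot A i (A.mulVec (x' - x)) = 0 := by
      intro i hi
      rw [Matrix.mulVec_sub, colDot_sub']
      rcases hi with h | h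
      · rw [hx'.1 i h, hsP i h]
        ring
      · rw [hx'.2.2 i h, hsM i h]
        ring
    have hdz := d_eq_zero' A F hli htri (x' - x) hd0 hcd
    exact sub_eq_zero.mp hdz
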